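/- The three-symbol upgrading capacity gain Δ[λ₁; λ₂,π₂; λ₃] is non-increasing in λ₁ and non-decreasing in λ₃: for λ₁' ≤ λ₁ < λ₂ < λ₃ ≤ λ₃' (all finite, λ₁' > 0), Δ[λ₁;λ₂,π₂;λ₃] ≤ Δ[λ₁';λ₂,π₂;λ₃']. -/

import Mathlib

/-!
With `φ x = (x + 1) log (x + 1) - x log x`, the bracket terms of `Δ` are `φ λ / log 2`, and
`Δ[λ₁; λ₂, π₂; λ₃]` is a positive multiple of `φ λ₂` minus the value at `λ₂` of the chord of `φ`
over `[λ₁, λ₃]`. Since `φ' x = log (1 + 1 / x)` decreases, `φ` is concave, and the chords of a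
concave function only move down when the interval is widened.
-/

/-- Capacity gain `Δ[lam₁; lam₂,pi₂; lam₃]` of the three-symbol upgrading merge. -/
noncomputable def deltaUp (lam₁ lam₂ pi₂ lam₃ : ℝ) : ℝ :=
  pi₂ / ((lam₂ + 1) * (lam₁ - lam₃)) *
    ((lam₃ - lam₂) * (lam₁ * Real.logb 2 (1 + 1 / lam₁) + Real.logb 2 (1 + lam₁)) +
     (lam₂ - lam₁) * (lam₃ * Real.logb 2 (1 + 1 / lam₃) + Real.logb 2 (1 + lam₃)) +
     (lam₁ - lam₃) * (lam₂ * Real.logb 2 (1 + 1 / lam₂) + Real.logb 2 (1 + lam₂)))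

open Real Set

noncomputable def chord (f : ℝ → ℝ) (a b x : ℝ) : ℝ :=
  ((b - x) * f a + (x - a) * f b) / (b - a)

section chord

variable {f : ℝ → ℝ} {s : Set ℝ} {a a' b b' x : ℝ}

lemma chord_eq_add_slope_left (hab : a ≠ b) : chord f a b x = f a + (x - a) * slope f a b := by
  rw [chord, slope_def_field]
  field_simp [sub_ne_zero.2 hab.symm]
  ring

lemma chord_eq_add_slope_right (hab : a ≠ b) : chord f a b x = f b + (x - b) * slope f b a := by
  rw [chord, slope_def_field]
  field_simp [sub_ne_zero.2 hab.symm, sub_ne_zero.2 hab]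
  ring

lemma ConcaveOn.chord_anti_right (hf : ConcaveOn ℝ s f) (ha : a ∈ s) (hb : b ∈ s) (hb' : b' ∈ s)
    (hab : a < b) (hbb' : b ≤ b') (hax : a ≤ x) : chord f a b' x ≤ chord f a b x := by
  rw [chord_eq_add_slope_left hab.ne, chord_eq_add_slope_left (hab.trans_le hbb').ne]
  have hslope := hf.slope_anti ha ⟨hb, hab.ne'⟩ ⟨hb', (hab.trans_le hbb').ne'⟩ hbb'
  exact add_le_add_right (mul_le_mul_of_nonneg_left hslope (sub_nonneg.2 hax)) _

lemma ConcaveOn.chord_anti_left (hf : ConcaveOn ℝ s f) (ha' : a' ∈ s) (ha : a ∈ s) (hb : b ∈ s)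
    (ha'a : a' ≤ a) (hab : a < b) (hxb : x ≤ b) : chord f a' b x ≤ chord f a b x := by
  rw [chord_eq_add_slope_right hab.ne, chord_eq_add_slope_right (ha'a.trans_lt hab).ne]
  have hslope := hf.slope_anti hb ⟨ha', (ha'a.trans_lt hab).ne⟩ ⟨ha, hab.ne⟩ ha'a
  exact add_le_add_right (mul_le_mul_of_nonpos_left hslope (sub_nonpos.2 hxb)) _

lemma ConcaveOn.chord_anti (hf : ConcaveOn ℝ s f) (ha' : a' ∈ s) (hb' : b' ∈ s)
    (ha'a : a' ≤ a) (hab : a < b) (hbb' : b ≤ b') (hax : a ≤ x) (hxb : x ≤ b) :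
    chord f a' b' x ≤ chord f a b x := by
  have hmem : ∀ y, a' ≤ y → y ≤ b' → y ∈ s := fun y h₁ h₂ ↦ hf.1.ordConnected.out ha' hb' ⟨h₁, h₂⟩
  calc chord f a' b' x ≤ chord f a' b x :=
        hf.chord_anti_right ha' (hmem b (by linarith) hbb') hb' (by linarith) hbb' (by linarith)
    _ ≤ chord f a b x :=
        hf.chord_anti_left ha' (hmem a ha'a (by linarith)) (hmem b (by linarith) hbb') ha'a hab hxb

end chord

noncomputable def capacityTerm (x : ℝ) : ℝ := (x + 1) * log (x + 1) - x * log x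

lemma hasDerivAt_capacityTerm {x : ℝ} (hx : 0 < x) :
    HasDerivAt capacityTerm (log (x + 1) - log x) x := by
  have h := ((hasDerivAt_mul_log (x := x + 1) (by linarith)).comp x
    ((hasDerivAt_id x).add_const 1)).sub (hasDerivAt_mul_log hx.ne')
  exact h.congr_deriv (by ring)

lemma concaveOn_capacityTerm : ConcaveOn ℝ (Ioi 0) capacityTerm := by
  refine AntitoneOn.concaveOn_of_deriv (convex_Ioi 0)
    (fun x hx ↦ (hasDerivAt_capacityTerm hx).continuousAt.continuousWithinAt) ?_ ?_ <;>
    rw [interior_Ioi]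
  · exact fun x hx ↦ (hasDerivAt_capacityTerm hx).differentiableAt.differentiableWithinAt
  · intro x (hx : 0 < x) y (hy : 0 < y) hxy
    rw [(hasDerivAt_capacityTerm hx).deriv, (hasDerivAt_capacityTerm hy).deriv,
      ← log_div (by linarith) hx.ne', ← log_div (by linarith) hy.ne']
    refine log_le_log (by positivity) ?_
    rw [div_le_div_iff₀ hy hx]
    linarith

lemma capacityTerm_div_log_two {x : ℝ} (hx : 0 < x) :
    capacityTerm x / log 2 = x * logb 2 (1 + 1 / x) + logb 2 (1 + x) := by
  rw [capacityTerm, logb, logb, show 1 + 1 / x = (x + 1) / x by field_simp,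
    log_div (by linarith) hx.ne', add_comm 1 x]
  ring

lemma deltaUp_eq_sub_chord {a c p b : ℝ} (ha : 0 < a) (hac : a < c) (hcb : c < b) :
    deltaUp a c p b =
      p / ((c + 1) * log 2) * (capacityTerm c - chord capacityTerm a b c) := by
  have hlog : log 2 ≠ 0 := (log_pos one_lt_two).ne'
  rw [deltaUp, ← capacityTerm_div_log_two ha, ← capacityTerm_div_log_two (by linarith),
    ← capacityTerm_div_log_two (by linarith), chord]
  field_simp [sub_ne_zero.2 (hac.trans hcb).ne, sub_ne_zero.2 (hac.trans hcb).ne']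
  ring

/-- `Δ[lam₁; lam₂,pi₂; lam₃]` is non-increasing in `lam₁` and
non-decreasing in `lam₃`. -/
theorem deltaUp_monotone (lam₁' lam₁ lam₂ pi₂ lam₃ lam₃' : ℝ)
    (h₀ : 0 < lam₁') (h₁ : lam₁' ≤ lam₁) (h₂ : lam₁ < lam₂) (h₃ : lam₂ < lam₃)
    (h₄ : lam₃ ≤ lam₃') (hpi : 0 < pi₂) :
    deltaUp lam₁ lam₂ pi₂ lam₃ ≤ deltaUp lam₁' lam₂ pi₂ lam₃' := by
  rw [deltaUp_eq_sub_chord (h₀.trans_le h₁) h₂ h₃, deltaUp_eq_sub_chord h₀ (h₁.trans_lt h₂) (h₃.trans_le h₄)]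
  have hfactor : 0 ≤ pi₂ / ((lam₂ + 1) * log 2) :=
    div_nonneg hpi.le (mul_nonneg (by linarith) (log_pos one_lt_two).le)
  gcongr
  exact concaveOn_capacityTerm.chord_anti h₀ (show 0 < lam₃' by linarith) h₁ (h₂.trans h₃) h₄
    h₂.le h₃.le
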